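/- arXiv:1209.3523 — 2 statements merged into one kernel-verified Lean document; each statement's English description precedes it below -/
import Mathlib

section
/- Let F be a spanning tree of G of minimum c-length among all spanning trees. Then τ(G, T_F △ T, c) ≤ (2/3)·opt(G,T,c), i.e. the minimum c-length of a (T_F △ T)-join is at most two thirds of the minimum length of a T-tour. -/
open scoped Classical
open Finset

noncomputable section

variable {V : Type*} [Fintype V] [DecidableEq V]

/-- The edge set of a graph as a `Finset` of `Sym2 V`. -/
def edgesOf (G : SimpleGraph V) : Finset (Sym2 V) :=
  Finset.univ.filter (fun e => e ∈ G.edgeSet)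

/-- Degree of a vertex in a set of edges. -/
def degOn (J : Finset (Sym2 V)) (v : V) : ℕ :=
  (J.filter (fun e => v ∈ e)).card

/-- The set of vertices of odd degree in a set of edges. -/
def oddVerts (J : Finset (Sym2 V)) : Finset V :=
  Finset.univ.filter (fun v => Odd (degOn J v))

/-- `J` is a `T`-join of `G`: a set of edges of `G` whose odd-degree vertex set is `T`. -/
def IsTJoin (G : SimpleGraph V) (T : Finset V) (J : Finset (Sym2 V)) : Prop :=
  J ⊆ edgesOf G ∧ oddVerts J = T

/-- `F` is a spanning tree of `G`: edges of `G`, connected, with `|V| - 1` edges. -/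
def IsSpanningTree (G : SimpleGraph V) (F : Finset (Sym2 V)) : Prop :=
  F ⊆ edgesOf G ∧ (SimpleGraph.fromEdgeSet (F : Set (Sym2 V))).Connected ∧
    F.card + 1 = Fintype.card V

/-- δ(W): the set of edges of `G` with exactly one endpoint in `W`. -/
def cutEdges (G : SimpleGraph V) (W : Finset V) : Finset (Sym2 V) :=
  (edgesOf G).filter (fun e => ∃ u v, e = s(u, v) ∧ u ∈ W ∧ v ∉ W)

/-- `𝒲` is a partition of the vertex set `V`. -/
def IsPartitionOf (𝒲 : Finset (Finset V)) : Prop :=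
  (∀ W ∈ 𝒲, W.Nonempty) ∧
  (∀ W₁ ∈ 𝒲, ∀ W₂ ∈ 𝒲, W₁ ≠ W₂ → Disjoint W₁ W₂) ∧
  (∀ v : V, ∃ W ∈ 𝒲, v ∈ W)

/-- δ(𝒲): the set of edges of `G` whose endpoints lie in different classes of `𝒲`. -/
def partitionCut (G : SimpleGraph V) (𝒲 : Finset (Finset V)) : Finset (Sym2 V) :=
  (edgesOf G).filter (fun e => ¬ ∃ W ∈ 𝒲, ∀ v ∈ e, v ∈ W)

/-- `x(A) = Σ_{e ∈ A} x(e)`. -/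
def xval (x : Sym2 V → ℝ) (A : Finset (Sym2 V)) : ℝ := ∑ e ∈ A, x e

/-- `cᵀx`, summed over the edges of `G`. -/
def dotE (G : SimpleGraph V) (c x : Sym2 V → ℝ) : ℝ := ∑ e ∈ edgesOf G, c e * x e

/-- Membership in the polyhedron `P(G,T)`. -/
def memP (G : SimpleGraph V) (T : Finset V) (x : Sym2 V → ℝ) : Prop :=
  (∀ W : Finset V, W.Nonempty → W ≠ Finset.univ → Even ((W ∩ T).card) →
      2 ≤ xval x (cutEdges G W)) ∧
  (∀ 𝒲 : Finset (Finset V), IsPartitionOf 𝒲 →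
      (𝒲.card : ℝ) - 1 ≤ xval x (partitionCut G 𝒲)) ∧
  (∀ e ∈ edgesOf G, 0 ≤ x e ∧ x e ≤ 2)

/-- `m` (an edge multiplicity vector, values in `{0,1,2}`) is a `T`-tour of `G`:
its support consists of edges of `G`, the support spans a connected graph on `V`,
and the vertices of odd degree (with multiplicities) are exactly `T`. -/
def IsTTour (G : SimpleGraph V) (T : Finset V) (m : Sym2 V → ℕ) : Prop :=
  (∀ e, 0 < m e → e ∈ G.edgeSet) ∧ (∀ e, m e ≤ 2) ∧
  (SimpleGraph.fromEdgeSet {e | 0 < m e}).Connected ∧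
  (∀ v : V, (Odd (∑ e ∈ edgesOf G, if v ∈ e then m e else 0) ↔ v ∈ T))

/-- The `c`-length of a multiset of edges given by multiplicities `m`. -/
def tourCost (G : SimpleGraph V) (c : Sym2 V → ℝ) (m : Sym2 V → ℕ) : ℝ :=
  ∑ e ∈ edgesOf G, (m e : ℝ) * c e

/-- `opt(G,T,c)`: the minimum `c`-length of a `T`-tour. -/
def optLen (G : SimpleGraph V) (T : Finset V) (c : Sym2 V → ℝ) : ℝ :=
  sInf {L : ℝ | ∃ m, IsTTour G T m ∧ L = tourCost G c m}

/-- The `c`-length of a set of edges. -/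
def setCost (c : Sym2 V → ℝ) (J : Finset (Sym2 V)) : ℝ := ∑ e ∈ J, c e

/-- `τ(G,T',c)`: the minimum `c`-length of a `T'`-join. -/
def tau (G : SimpleGraph V) (T' : Finset V) (c : Sym2 V → ℝ) : ℝ :=
  sInf {L : ℝ | ∃ J, IsTJoin G T' J ∧ L = setCost c J}

/-- Membership in `Q₊(G,T')`: nonnegative and at least `1` on every `T'`-cut. -/
def memQplus (G : SimpleGraph V) (T' : Finset V) (x : Sym2 V → ℝ) : Prop :=
  (∀ e ∈ edgesOf G, 0 ≤ x e) ∧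
  (∀ W : Finset V, W.Nonempty → W ≠ Finset.univ → Odd ((W ∩ T').card) →
      1 ≤ xval x (cutEdges G W))

/-- Symmetric difference of two finite sets. -/
def symDiff (A B : Finset V) : Finset V := (A \ B) ∪ (B \ A)

/-- `p*(e) = Σ_{F ∈ 𝓕, e ∈ F(T)} λ_F`, where `JT F` plays the role of `F(T)`. -/
def pstar (𝓕 : Finset (Finset (Sym2 V))) (lam : Finset (Sym2 V) → ℝ)
    (JT : Finset (Sym2 V) → Finset (Sym2 V)) (e : Sym2 V) : ℝ :=
  ∑ F ∈ 𝓕.filter (fun F => e ∈ JT F), lam F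

/-- `q*(e) = Σ_{F ∈ 𝓕, e ∈ F ∖ F(T)} λ_F`. -/
def qstar (𝓕 : Finset (Finset (Sym2 V))) (lam : Finset (Sym2 V) → ℝ)
    (JT : Finset (Sym2 V) → Finset (Sym2 V)) (e : Sym2 V) : ℝ :=
  ∑ F ∈ 𝓕.filter (fun F => e ∈ F \ JT F), lam F

/-- `𝒬`: the family of cuts `Q` of `G` (as edge sets) with `x*(Q) < 2`. -/
def Qset (G : SimpleGraph V) (xstar : Sym2 V → ℝ) : Finset (Finset (Sym2 V)) :=
  Finset.univ.filter (fun C : Finset (Sym2 V) =>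
    (∃ W : Finset V, W.Nonempty ∧ W ≠ Finset.univ ∧ C = cutEdges G W) ∧ xval xstar C < 2)

/-- `x^Q(e) = Σ_{F ∈ 𝓕, Q ∩ F = {e}} λ_F`. -/
def xQ (𝓕 : Finset (Finset (Sym2 V))) (lam : Finset (Sym2 V) → ℝ)
    (C : Finset (Sym2 V)) (e : Sym2 V) : ℝ :=
  ∑ F ∈ 𝓕.filter (fun F => C ∩ F = {e}), lam F

/-- `f^Q(β) = max {0, (4β - 1 - β x*(Q)) / (2 - x*(Q))}`. -/
def fQ (xstar : Sym2 V → ℝ) (β : ℝ) (C : Finset (Sym2 V)) : ℝ :=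
  max 0 ((4 * β - 1 - β * xval xstar C) / (2 - xval xstar C))

/-- `s^F(β) = Σ_{Q ∈ 𝒬, |Q ∩ F| ≥ 2} f^Q(β) x^Q`. -/
def sF (G : SimpleGraph V) (xstar : Sym2 V → ℝ) (𝓕 : Finset (Finset (Sym2 V)))
    (lam : Finset (Sym2 V) → ℝ) (β : ℝ) (F : Finset (Sym2 V)) (e : Sym2 V) : ℝ :=
  ∑ C ∈ (Qset G xstar).filter (fun C => 2 ≤ (C ∩ F).card), fQ xstar β C * xQ 𝓕 lam C e

end

/-!
Fix a `T`-tour `m`. Its support is connected, so it contains a spanning tree `F'`, and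
minimality gives `c(F) ≤ c(F') ≤ c(m)`. The trees `F` and `F'` contain `(T_F △ T)`-joins `X`
and `Y`, and `Z = {e | m e odd} △ F △ X △ Y` is a third one. Edgewise
`𝟙_X + 𝟙_Y + 𝟙_Z ≤ m + 𝟙_F`, so `c(X) + c(Y) + c(Z) ≤ c(m) + c(F) ≤ 2 c(m)` and the cheapest
of the three joins costs at most `(2/3) c(m)`.
-/

open scoped symmDiff

theorem Finset.even_card_symmDiff_iff {α : Type*} [DecidableEq α] (s t : Finset α) :
    Even (s ∆ t).card ↔ (Even s.card ↔ Even t.card) := by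
  have hsub : (s ∩ t).card ≤ (s ∪ t).card := card_le_card inter_subset_union
  have hcard : (s ∆ t).card = (s ∪ t).card - (s ∩ t).card := by
    rw [symmDiff_eq_sup_sdiff_inf, sup_eq_union, inf_eq_inter,
      card_sdiff_of_subset inter_subset_union]
  have := card_union_add_card_inter s t
  rw [hcard, Nat.even_iff, Nat.even_iff, Nat.even_iff]
  omega

theorem Finset.symmDiff_subset_of_subset {α : Type*} [DecidableEq α] {s t u : Finset α}
    (hs : s ⊆ u) (ht : t ⊆ u) : s ∆ t ⊆ u :=
  symmDiff_subset_union.trans (union_subset hs ht)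

theorem symDiff_eq_symmDiff {α : Type*} [DecidableEq α] (A B : Finset α) :
    symDiff A B = A ∆ B := rfl

section OddVertices

variable {V : Type*} [Fintype V] [DecidableEq V]

theorem mem_oddVerts {J : Finset (Sym2 V)} {v : V} : v ∈ oddVerts J ↔ Odd (degOn J v) := by
  simp [oddVerts]

theorem oddVerts_symmDiff (A B : Finset (Sym2 V)) :
    oddVerts (A ∆ B) = oddVerts A ∆ oddVerts B := by
  ext v
  have hfilter : (A ∆ B).filter (v ∈ ·) = A.filter (v ∈ ·) ∆ B.filter (v ∈ ·) := by
    ext e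
    simp only [mem_filter, mem_symmDiff]
    tauto
  simp only [mem_symmDiff, mem_oddVerts, degOn, hfilter, ← Nat.not_even_iff_odd,
    even_card_symmDiff_iff]
  tauto

@[simp]
theorem oddVerts_empty : oddVerts (∅ : Finset (Sym2 V)) = ∅ := by
  ext v
  simp [mem_oddVerts, degOn]

theorem oddVerts_singleton {u w : V} (h : u ≠ w) :
    oddVerts ({s(u, w)} : Finset (Sym2 V)) = {u} ∆ {w} := by
  ext v
  by_cases hu : v = u <;> by_cases hw : v = w <;>
    simp_all [mem_oddVerts, degOn, filter_singleton, mem_symmDiff]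

theorem even_card_oddVerts {J : Finset (Sym2 V)} (hJ : ∀ e ∈ J, ¬ e.IsDiag) :
    Even (oddVerts J).card := by
  induction J using Finset.induction_on with
  | empty => simp
  | @insert e J he ih =>
    have hdiag : ¬ e.IsDiag := hJ e (mem_insert_self e J)
    rw [insert_eq, ← sup_eq_union, ← (disjoint_singleton_left.2 he).symmDiff_eq_sup,
      oddVerts_symmDiff, even_card_symmDiff_iff]
    induction e using Sym2.inductionOn with
    | _ u w =>
      have huw : u ≠ w := by simpa using hdiag
      simp only [oddVerts_singleton huw, even_card_symmDiff_iff, card_singleton]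
      simpa using ih fun e he' => hJ e (mem_insert_of_mem he')

theorem even_card_oddVerts_of_subset {G : SimpleGraph V} {J : Finset (Sym2 V)}
    (hJ : J ⊆ edgesOf G) : Even (oddVerts J).card :=
  even_card_oddVerts fun e he => G.not_isDiag_of_mem_edgeSet (by simpa [edgesOf] using hJ he)

end OddVertices

section Joins

variable {V : Type*} [Fintype V] [DecidableEq V]

theorem exists_subset_oddVerts_eq_of_walk (R : Finset (Sym2 V)) {u v : V}
    (p : (SimpleGraph.fromEdgeSet (R : Set (Sym2 V))).Walk u v) :
    ∃ Y ⊆ R, oddVerts Y = {u} ∆ {v} := by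
  induction p with
  | nil => exact ⟨∅, empty_subset _, by simp⟩
  | @cons a b c hab p ih =>
    obtain ⟨Y, hYR, hY⟩ := ih
    obtain ⟨habR, hab⟩ := (SimpleGraph.fromEdgeSet_adj _).1 hab
    refine ⟨{s(a, b)} ∆ Y, symmDiff_subset_of_subset ?_ hYR, ?_⟩
    · simpa using habR
    · rw [oddVerts_symmDiff, oddVerts_singleton hab, hY, symmDiff_assoc,
        symmDiff_symmDiff_cancel_left]

/-- Joining a fixed root to each new vertex realizes every `N` up to the root; parity then
removes the root. -/
theorem exists_subset_oddVerts_eq {R : Finset (Sym2 V)}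
    (hR : (SimpleGraph.fromEdgeSet (R : Set (Sym2 V))).Connected)
    (hRdiag : ∀ e ∈ R, ¬ e.IsDiag) {N : Finset V} (hN : Even N.card) :
    ∃ Y ⊆ R, oddVerts Y = N := by
  obtain ⟨r⟩ := hR.nonempty
  have hroot : ∀ N : Finset V, ∃ Y ⊆ R, oddVerts Y ∆ N ⊆ {r} := by
    intro N
    induction N using Finset.induction_on with
    | empty => exact ⟨∅, empty_subset _, by simp⟩
    | @insert v N hv ih =>
      obtain ⟨Y, hYR, hY⟩ := ih
      obtain ⟨P, hPR, hP⟩ := exists_subset_oddVerts_eq_of_walk R (hR.preconnected r v).some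
      refine ⟨P ∆ Y, symmDiff_subset_of_subset hPR hYR, ?_⟩
      have hins : insert v N = {v} ∆ N := by
        rw [insert_eq, ← sup_eq_union, (disjoint_singleton_left.2 hv).symmDiff_eq_sup]
      intro x hx
      rw [oddVerts_symmDiff, hP, hins] at hx
      have : ({r} ∆ {v} ∆ oddVerts Y) ∆ ({v} ∆ N) = {r} ∆ (oddVerts Y ∆ N) := by
        simp only [symmDiff_assoc, symmDiff_left_comm {v}, symmDiff_symmDiff_cancel_left]
      rw [this, mem_symmDiff] at hx
      rcases hx with ⟨hx, -⟩ | ⟨hx, hxr⟩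
      · exact hx
      · exact absurd (hY hx) hxr
  obtain ⟨Y, hYR, hY⟩ := hroot N
  refine ⟨Y, hYR, symmDiff_eq_empty.1 ?_⟩
  have heven : Even (oddVerts Y ∆ N).card := (even_card_symmDiff_iff _ _).2
    (iff_of_true (even_card_oddVerts fun e he => hRdiag e (hYR he)) hN)
  rcases subset_singleton_iff.1 hY with h | h
  · exact h
  · rw [h, card_singleton] at heven
    exact absurd heven (by decide)

end Joins

section SpanningTrees

variable {V : Type*} [Fintype V] {G : SimpleGraph V}

theorem mem_edgesOf {e : Sym2 V} : e ∈ edgesOf G ↔ e ∈ G.edgeSet := by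
  simp [edgesOf]

theorem exists_isSpanningTree_subset {S : Finset (Sym2 V)}
    (hS : S ⊆ edgesOf G) (hconn : (SimpleGraph.fromEdgeSet (S : Set (Sym2 V))).Connected) :
    ∃ F ⊆ S, IsSpanningTree G F := by
  obtain ⟨H, hle, hH⟩ := hconn.exists_isTree_le
  have hHS : H.edgeFinset ⊆ S := fun e he => by
    have := SimpleGraph.edgeSet_mono hle (SimpleGraph.mem_edgeFinset.1 he)
    exact (SimpleGraph.edgeSet_fromEdgeSet _ ▸ this).1
  refine ⟨H.edgeFinset, hHS, hHS.trans hS, ?_, hH.card_edgeFinset⟩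
  rw [SimpleGraph.coe_edgeFinset, SimpleGraph.fromEdgeSet_edgeSet]
  exact hH.connected

theorem setCost_support_le_tourCost {c : Sym2 V → ℝ} (hc : ∀ e, 0 ≤ c e) (m : Sym2 V → ℕ) :
    setCost c ((edgesOf G).filter fun e => 0 < m e) ≤ tourCost G c m := by
  rw [setCost, tourCost, sum_filter]
  refine sum_le_sum fun e _ => ?_
  split_ifs with hm
  · exact le_mul_of_one_le_left (hc e) (by exact_mod_cast hm)
  · exact mul_nonneg (Nat.cast_nonneg _) (hc e)

end SpanningTrees

section Tours

variable {V : Type*} [Fintype V] [DecidableEq V] {G : SimpleGraph V} {T : Finset V}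
  {m : Sym2 V → ℕ}

theorem mem_oddVerts_filter_odd (E : Finset (Sym2 V)) (m : Sym2 V → ℕ) (v : V) :
    v ∈ oddVerts (E.filter fun e => Odd (m e)) ↔ Odd (∑ e ∈ E, if v ∈ e then m e else 0) := by
  rw [← sum_filter, odd_sum_iff_odd_card_odd, mem_oddVerts, degOn, filter_filter, filter_filter]
  simp only [and_comm]

theorem IsTTour.oddVerts_filter_odd (h : IsTTour G T m) :
    oddVerts ((edgesOf G).filter fun e => Odd (m e)) = T := by
  ext v
  rw [mem_oddVerts_filter_odd, h.2.2.2 v]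

theorem IsTTour.connected_support (h : IsTTour G T m) :
    (SimpleGraph.fromEdgeSet (((edgesOf G).filter fun e => 0 < m e : Finset (Sym2 V)) :
      Set (Sym2 V))).Connected := by
  convert h.2.2.1 using 2
  ext e
  simpa [mem_edgesOf] using h.1 e

theorem IsTTour.setCost_le_tourCost {c : Sym2 V → ℝ} (hc : ∀ e, 0 ≤ c e) {F : Finset (Sym2 V)}
    (hFmin : ∀ F' : Finset (Sym2 V), IsSpanningTree G F' → setCost c F ≤ setCost c F')
    (h : IsTTour G T m) : setCost c F ≤ tourCost G c m := by
  obtain ⟨F', hF'S, hF'⟩ := exists_isSpanningTree_subset (filter_subset _ _) h.connected_support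
  calc setCost c F ≤ setCost c F' := hFmin F' hF'
    _ ≤ setCost c ((edgesOf G).filter fun e => 0 < m e) :=
      sum_le_sum_of_subset_of_nonneg hF'S fun e _ _ => hc e
    _ ≤ tourCost G c m := setCost_support_le_tourCost hc m

theorem IsSpanningTree.even_card_symmDiff_oddVerts {F : Finset (Sym2 V)}
    (hF : IsSpanningTree G F) (hT : Even T.card) : Even (oddVerts F ∆ T).card :=
  (even_card_symmDiff_iff _ _).2 (iff_of_true (even_card_oddVerts_of_subset hF.1) hT)

theorem IsSpanningTree.exists_subset_oddVerts_eq {F : Finset (Sym2 V)} (hF : IsSpanningTree G F)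
    {N : Finset V} (hN : Even N.card) : ∃ X ⊆ F, oddVerts X = N :=
  _root_.exists_subset_oddVerts_eq hF.2.1
    (fun _ he => G.not_isDiag_of_mem_edgeSet (mem_edgesOf.1 (hF.1 he))) hN

/-- A spanning tree plus a `(T_F △ T)`-join inside it is a `T`-tour. -/
theorem IsSpanningTree.exists_isTTour {F : Finset (Sym2 V)} (hF : IsSpanningTree G F)
    (hT : Even T.card) : ∃ m, IsTTour G T m := by
  obtain ⟨X, hXF, hX⟩ := hF.exists_subset_oddVerts_eq (hF.even_card_symmDiff_oddVerts hT)
  let m : Sym2 V → ℕ := fun e => (if e ∈ F then 1 else 0) + (if e ∈ X then 1 else 0)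
  have hsupp : ∀ e, 0 < m e ↔ e ∈ F := fun e => by
    by_cases heX : e ∈ X
    · simp [m, heX, hXF heX]
    · by_cases heF : e ∈ F <;> simp [m, heX, heF]
  have hodd : (edgesOf G).filter (fun e => Odd (m e)) = F ∆ X := by
    ext e
    by_cases heX : e ∈ X
    · simp [m, mem_symmDiff, heX, hXF heX]
    · by_cases heF : e ∈ F
      · simp [m, mem_symmDiff, heX, heF, hF.1 heF]
      · simp [m, mem_symmDiff, heX, heF]
  refine ⟨m, fun e he => mem_edgesOf.1 (hF.1 ((hsupp e).1 he)), fun e => ?_, ?_, fun v => ?_⟩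
  · simp only [m]
    split_ifs <;> omega
  · convert hF.2.1 using 2
    ext e
    exact hsupp e
  · rw [← mem_oddVerts_filter_odd, hodd, oddVerts_symmDiff, hX, symmDiff_symmDiff_cancel_left]

end Tours

theorem setCost_eq_sum_indicator {V : Type*} [DecidableEq V] {c : Sym2 V → ℝ}
    {A E : Finset (Sym2 V)} (h : A ⊆ E) :
    setCost c A = ∑ e ∈ E, ((if e ∈ A then 1 else 0 : ℕ) : ℝ) * c e := by
  simp [setCost, ite_mul, sum_ite_mem, inter_eq_right.2 h]

section TwoThirds

variable {V : Type*} [Fintype V] [DecidableEq V] {G : SimpleGraph V} {T : Finset V}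
  {m : Sym2 V → ℕ} {c : Sym2 V → ℝ}

/-- Edgewise the three sets on the left have the parity of `m + 𝟙_F`, and `X`, `Y` alone
never exceed it. -/
theorem setCost_add_add_le_tourCost_add (hc : ∀ e, 0 ≤ c e) {F X Y : Finset (Sym2 V)}
    (hF : F ⊆ edgesOf G) (hXF : X ⊆ F) (hY : Y ⊆ (edgesOf G).filter fun e => 0 < m e) :
    setCost c X + setCost c Y + setCost c (((edgesOf G).filter fun e => Odd (m e)) ∆ F ∆ X ∆ Y)
      ≤ tourCost G c m + setCost c F := by
  set O := (edgesOf G).filter fun e => Odd (m e)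
  have hYE : Y ⊆ edgesOf G := hY.trans (filter_subset _ _)
  have hJE : O ∆ F ∆ X ∆ Y ⊆ edgesOf G :=
    symmDiff_subset_of_subset (symmDiff_subset_of_subset
      (symmDiff_subset_of_subset (filter_subset _ _) hF) (hXF.trans hF)) hYE
  rw [setCost_eq_sum_indicator (hXF.trans hF), setCost_eq_sum_indicator hYE,
    setCost_eq_sum_indicator hJE, setCost_eq_sum_indicator hF, tourCost,
    ← sum_add_distrib, ← sum_add_distrib, ← sum_add_distrib]
  refine sum_le_sum fun e he => ?_
  have hsymm : ∀ A B : Finset (Sym2 V), (if e ∈ A ∆ B then 1 else 0 : ℕ) =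
      ((if e ∈ A then 1 else 0) + (if e ∈ B then 1 else 0)) % 2 := fun A B => by
    by_cases hA : e ∈ A <;> by_cases hB : e ∈ B <;> simp [mem_symmDiff, hA, hB]
  have hO : (if e ∈ O then 1 else 0 : ℕ) = m e % 2 := by
    simp only [O, mem_filter, he, true_and, Nat.odd_iff]
    split_ifs <;> omega
  have key : (if e ∈ X then 1 else 0) + (if e ∈ Y then 1 else 0) +
      (if e ∈ O ∆ F ∆ X ∆ Y then 1 else 0) ≤ m e + (if e ∈ F then 1 else 0) := by
    rw [hsymm, hsymm, hsymm, hO]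
    split_ifs <;> grind
  rw [← add_mul, ← add_mul, ← add_mul]
  exact mul_le_mul_of_nonneg_right (by exact_mod_cast key) (hc e)

theorem IsSpanningTree.exists_isTJoin_three_mul_le (hc : ∀ e, 0 ≤ c e) {F : Finset (Sym2 V)}
    (hF : IsSpanningTree G F) (hT : Even T.card) (hm : IsTTour G T m) :
    ∃ J, IsTJoin G (symDiff (oddVerts F) T) J ∧
      3 * setCost c J ≤ tourCost G c m + setCost c F := by
  have hN := hF.even_card_symmDiff_oddVerts hT
  obtain ⟨X, hXF, hX⟩ := hF.exists_subset_oddVerts_eq hN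
  obtain ⟨F', hF'S, hF'⟩ := exists_isSpanningTree_subset (filter_subset _ _) hm.connected_support
  obtain ⟨Y, hYF', hY⟩ := hF'.exists_subset_oddVerts_eq hN
  set Z := ((edgesOf G).filter fun e => Odd (m e)) ∆ F ∆ X ∆ Y
  have hZ : oddVerts Z = oddVerts F ∆ T := by
    simp only [Z, oddVerts_symmDiff, hm.oddVerts_filter_odd, hX, hY,
      symmDiff_symmDiff_cancel_right, symmDiff_comm T]
  have hYE : Y ⊆ edgesOf G := (hYF'.trans hF'S).trans (filter_subset _ _)
  have hZE : Z ⊆ edgesOf G :=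
    symmDiff_subset_of_subset (symmDiff_subset_of_subset
      (symmDiff_subset_of_subset (filter_subset _ _) hF.1) (hXF.trans hF.1)) hYE
  have hsum := setCost_add_add_le_tourCost_add hc hF.1 hXF (hYF'.trans hF'S)
  rw [symDiff_eq_symmDiff]
  rcases le_total (setCost c X) (setCost c Y) with hXY | hYX
  · rcases le_total (setCost c X) (setCost c Z) with hXZ | hZX
    · exact ⟨X, ⟨hXF.trans hF.1, hX⟩, by linarith⟩
    · exact ⟨Z, ⟨hZE, hZ⟩, by linarith⟩
  · rcases le_total (setCost c Y) (setCost c Z) with hYZ | hZY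
    · exact ⟨Y, ⟨hYE, hY⟩, by linarith⟩
    · exact ⟨Z, ⟨hZE, hZ⟩, by linarith⟩

theorem tau_le_setCost (hc : ∀ e, 0 ≤ c e) {N : Finset V} {J : Finset (Sym2 V)}
    (hJ : IsTJoin G N J) : tau G N c ≤ setCost c J :=
  csInf_le ⟨0, by rintro _ ⟨J, -, rfl⟩; exact sum_nonneg fun e _ => hc e⟩ ⟨J, hJ, rfl⟩

end TwoThirds

theorem stmt4_general {V : Type*} [Fintype V] [DecidableEq V]
    (G : SimpleGraph V)
    (T : Finset V) (hT : Even T.card)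
    (c : Sym2 V → ℝ) (hc : ∀ e, 0 ≤ c e)
    (F : Finset (Sym2 V)) (hF : IsSpanningTree G F)
    (hFmin : ∀ F' : Finset (Sym2 V), IsSpanningTree G F' → setCost c F ≤ setCost c F') :
    tau G (symDiff (oddVerts F) T) c ≤ (2 / 3) * optLen G T c := by
  suffices h : 3 / 2 * tau G (symDiff (oddVerts F) T) c ≤ optLen G T c by linarith
  obtain ⟨m₀, hm₀⟩ := hF.exists_isTTour hT
  refine le_csInf ⟨_, m₀, hm₀, rfl⟩ ?_
  rintro _ ⟨m, hm, rfl⟩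
  obtain ⟨J, hJ, hJc⟩ := hF.exists_isTJoin_three_mul_le hc hT hm
  have hτ := tau_le_setCost hc hJ
  have hFm := hm.setCost_le_tourCost hc hFmin
  linarith

/-- for a minimum-length spanning tree `F`,
`τ(G, T_F △ T, c) ≤ (2/3) opt(G,T,c)`. -/
theorem stmt4 {V : Type*} [Fintype V] [DecidableEq V]
    (G : SimpleGraph V) (hG : G.Connected)
    (T : Finset V) (hT : Even T.card)
    (c : Sym2 V → ℝ) (hc : ∀ e, 0 ≤ c e)
    (F : Finset (Sym2 V)) (hF : IsSpanningTree G F)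
    (hFmin : ∀ F' : Finset (Sym2 V), IsSpanningTree G F' → setCost c F ≤ setCost c F') :
    tau G (symDiff (oddVerts F) T) c ≤ (2 / 3) * optLen G T c :=
  stmt4_general G T hT c hc F hF hFmin
end

section
/- For every cut Q ∈ 𝒬: (i) x^Q(e) = 0 for every edge e ∉ Q; (ii) Σ_{e∈E} x^Q(e) = x^Q(Q) ≥ 2 − x*(Q); and (iii) Σ_{Q∈𝒬} x^Q ≤ p* componentwise. -/
open scoped Classical
open Finset

noncomputable section Helpers

variable {V : Type*} [Fintype V] [DecidableEq V]

lemma st11_rep (e : Sym2 V) : ∃ a b : V, e = s(a, b) := by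
  induction e using Sym2.inductionOn with
  | hf a b => exact ⟨a, b, rfl⟩

lemma st11_mem_cutEdges {G : SimpleGraph V} {W : Finset V} {u v : V}
    (he : s(u, v) ∈ edgesOf G) :
    s(u, v) ∈ cutEdges G W ↔ ((u ∈ W ∧ v ∉ W) ∨ (v ∈ W ∧ u ∉ W)) := by
  unfold cutEdges
  simp only [Finset.mem_filter, he, true_and]
  constructor
  · rintro ⟨a, b, hab, ha, hb⟩
    rcases Sym2.eq_iff.mp hab with ⟨rfl, rfl⟩ | ⟨rfl, rfl⟩
    · exact Or.inl ⟨ha, hb⟩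
    · exact Or.inr ⟨ha, hb⟩
  · rintro (⟨h1, h2⟩ | ⟨h1, h2⟩)
    · exact ⟨u, v, rfl, h1, h2⟩
    · exact ⟨v, u, Sym2.eq_swap.symm, h1, h2⟩

lemma st11_walk_cross {H : SimpleGraph V} {W : Finset V} :
    ∀ {u v : V}, H.Walk u v → u ∈ W → v ∉ W →
      ∃ a b, H.Adj a b ∧ a ∈ W ∧ b ∉ W := by
  intro u v p
  induction p with
  | nil => intro hu hv; exact absurd hu hv
  | @cons a m w h p ih =>
    intro hu hv
    by_cases hm : m ∈ W
    · exact ih hm hv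
    · exact ⟨a, m, h, hu, hm⟩

lemma st11_tree_meets_cut {G : SimpleGraph V} {F : Finset (Sym2 V)}
    (hF : IsSpanningTree G F) {W : Finset V} (hne : W.Nonempty)
    (hneu : W ≠ Finset.univ) :
    ∃ e, e ∈ cutEdges G W ∧ e ∈ F := by
  obtain ⟨u, hu⟩ := hne
  obtain ⟨v, hv⟩ : ∃ v, v ∉ W := by
    by_contra h; push_neg at h; exact hneu (Finset.eq_univ_iff_forall.mpr h)
  obtain ⟨p⟩ := hF.2.1.preconnected u v
  obtain ⟨a, b, hab, ha, hb⟩ := st11_walk_cross p hu hv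
  rw [SimpleGraph.fromEdgeSet_adj] at hab
  have heF : s(a, b) ∈ F := by exact_mod_cast hab.1
  have heG : s(a, b) ∈ edgesOf G := hF.1 heF
  exact ⟨s(a, b), (st11_mem_cutEdges heG).mpr (Or.inl ⟨ha, hb⟩), heF⟩

end Helpers

noncomputable section Helpers2

variable {V : Type*} [Fintype V] [DecidableEq V]

lemma st11_zmod (n : ℕ) : (n : ZMod 2) = if Odd n then 1 else 0 := by
  rw [← ZMod.natCast_mod]
  rcases Nat.even_or_odd n with h | h
  · simp [Nat.even_iff.mp h, Nat.not_odd_iff_even.mpr h]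
  · simp [Nat.odd_iff.mp h, h]

lemma st11_odd_of_zmod {a b : ℕ} (h : (a : ZMod 2) = (b : ZMod 2)) :
    Odd a ↔ Odd b := by
  rw [st11_zmod, st11_zmod] at h
  by_cases ha : Odd a <;> by_cases hb : Odd b <;> simp [ha, hb] at h ⊢

lemma st11_parity {G : SimpleGraph V} {T : Finset V} {J : Finset (Sym2 V)}
    (hJ : IsTJoin G T J) (W : Finset V) :
    ((cutEdges G W ∩ J).card : ZMod 2) = ((W ∩ T).card : ZMod 2) := by
  have key : ∀ e ∈ J, ((W.filter (fun v => v ∈ e)).card : ZMod 2)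
      = if e ∈ cutEdges G W then 1 else 0 := by
    intro e he
    have heG : e ∈ edgesOf G := hJ.1 he
    obtain ⟨a, b, rfl⟩ := st11_rep e
    have hadj : G.Adj a b := by
      have := heG
      unfold edgesOf at this
      simp only [Finset.mem_filter, Finset.mem_univ, true_and,
        SimpleGraph.mem_edgeSet] at this
      exact this
    have hab : a ≠ b := hadj.ne
    have hfilter : W.filter (fun v => v ∈ s(a, b)) =
        W.filter (fun v => v = a) ∪ W.filter (fun v => v = b) := by
      rw [← Finset.filter_or]
      apply Finset.filter_congr
      intro v _
      simp [Sym2.mem_iff]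
    have hdisj : Disjoint (W.filter (fun v => v = a)) (W.filter (fun v => v = b)) := by
      simp only [Finset.disjoint_left, Finset.mem_filter]
      rintro x ⟨-, rfl⟩ ⟨-, rfl⟩
      exact hab rfl
    have hcard : (W.filter (fun v => v ∈ s(a, b))).card =
        (if a ∈ W then 1 else 0) + (if b ∈ W then 1 else 0) := by
      rw [hfilter, Finset.card_union_of_disjoint hdisj, Finset.filter_eq' W a,
        Finset.filter_eq' W b]
      split_ifs <;> simp
    rw [hcard]
    by_cases ha : a ∈ W <;> by_cases hb : b ∈ W <;>
      simp [ha, hb, st11_mem_cutEdges heG] <;> decide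
  calc ((cutEdges G W ∩ J).card : ZMod 2)
      = ∑ e ∈ J, (if e ∈ cutEdges G W then (1 : ZMod 2) else 0) := by
        rw [Finset.sum_boole, Finset.filter_mem_eq_inter, Finset.inter_comm]
    _ = ∑ e ∈ J, ((W.filter (fun v => v ∈ e)).card : ZMod 2) :=
        (Finset.sum_congr rfl key).symm
    _ = ∑ v ∈ W, ((degOn J v : ZMod 2)) := by
        push_cast [Finset.card_filter, degOn]
        rw [Finset.sum_comm]
    _ = ∑ v ∈ W, (if v ∈ T then (1 : ZMod 2) else 0) := by
        refine Finset.sum_congr rfl fun v _ => ?_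
        rw [st11_zmod]
        have : Odd (degOn J v) ↔ v ∈ T := by
          rw [← hJ.2]
          unfold oddVerts
          simp
        simp [this]
    _ = ((W ∩ T).card : ZMod 2) := by
        rw [Finset.sum_boole, Finset.filter_mem_eq_inter]

lemma st11_join_meets_cut {G : SimpleGraph V} {T : Finset V} {J : Finset (Sym2 V)}
    (hJ : IsTJoin G T J) {W : Finset V} (hodd : Odd ((W ∩ T).card)) :
    Odd ((cutEdges G W ∩ J).card) :=
  (st11_odd_of_zmod (st11_parity hJ W)).mpr hodd

lemma st11_Qset_spec {G : SimpleGraph V} {xstar : Sym2 V → ℝ} {T : Finset V}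
    (hxP : memP G T xstar) {C : Finset (Sym2 V)} (hC : C ∈ Qset G xstar) :
    ∃ W : Finset V, W.Nonempty ∧ W ≠ Finset.univ ∧ C = cutEdges G W ∧
      Odd ((W ∩ T).card) := by
  simp only [Qset, Finset.mem_filter, Finset.mem_univ, true_and] at hC
  obtain ⟨⟨W, h1, h2, rfl⟩, hlt⟩ := hC
  refine ⟨W, h1, h2, rfl, ?_⟩
  by_contra h
  exact absurd (hxP.1 W h1 h2 (Nat.not_odd_iff_even.mp h)) (by linarith)

end Helpers2

noncomputable section Helpers3

variable {V : Type*} [Fintype V] [DecidableEq V]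

set_option maxHeartbeats 2000000 in
lemma st11_cut_unique {G : SimpleGraph V} {F : Finset (Sym2 V)}
    (hF : IsSpanningTree G F) {W₁ W₂ : Finset V} {e : Sym2 V}
    (hC1 : cutEdges G W₁ ∩ F = {e}) (hC2 : cutEdges G W₂ ∩ F = {e}) :
    cutEdges G W₁ = cutEdges G W₂ := by
  have heF : e ∈ F := by
    have : e ∈ cutEdges G W₁ ∩ F := by rw [hC1]; exact Finset.mem_singleton_self _
    exact (Finset.mem_inter.mp this).2
  have heG : e ∈ edgesOf G := hF.1 heF
  obtain ⟨a, b, rfl⟩ := st11_rep e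
  set H' : SimpleGraph V :=
    SimpleGraph.fromEdgeSet ((F.erase s(a, b) : Finset (Sym2 V)) : Set (Sym2 V)) with hH'
  -- Claim A: membership in W is constant along H'-walks
  have claimA : ∀ (W : Finset V), cutEdges G W ∩ F = {s(a, b)} →
      ∀ u v : V, H'.Reachable u v → (u ∈ W ↔ v ∈ W) := by
    intro W hW u v huv
    obtain ⟨p⟩ := huv
    induction p with
    | nil => rfl
    | @cons x m z h p ih =>
      rw [SimpleGraph.fromEdgeSet_adj] at h
      have hmem : s(x, m) ∈ F.erase s(a, b) := by exact_mod_cast h.1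
      rw [Finset.mem_erase] at hmem
      have hxm : x ∈ W ↔ m ∈ W := by
        by_contra hcon
        have hcross : (x ∈ W ∧ m ∉ W) ∨ (m ∈ W ∧ x ∉ W) := by tauto
        have : s(x, m) ∈ cutEdges G W ∩ F :=
          Finset.mem_inter.mpr ⟨(st11_mem_cutEdges (hF.1 hmem.2)).mpr hcross, hmem.2⟩
        rw [hW, Finset.mem_singleton] at this
        exact hmem.1 this
      exact hxm.trans ih
  -- Claim B: every vertex reaches a or b in H'
  have claimB : ∀ v : V, H'.Reachable v a ∨ H'.Reachable v b := by
    have aux : ∀ (u w : V) (p : (SimpleGraph.fromEdgeSet (F : Set (Sym2 V))).Walk u w),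
        H'.Reachable u w ∨ H'.Reachable u a ∨ H'.Reachable u b := by
      intro u w p
      induction p with
      | nil => exact Or.inl (SimpleGraph.Reachable.refl _)
      | @cons x m z h p ih =>
        rw [SimpleGraph.fromEdgeSet_adj] at h
        have hmF : s(x, m) ∈ F := by exact_mod_cast h.1
        by_cases he : s(x, m) = s(a, b)
        · rcases Sym2.eq_iff.mp he with ⟨rfl, rfl⟩ | ⟨rfl, rfl⟩
          · exact Or.inr (Or.inl (SimpleGraph.Reachable.refl _))
          · exact Or.inr (Or.inr (SimpleGraph.Reachable.refl _))
        · have hadj : H'.Adj x m := by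
            rw [hH', SimpleGraph.fromEdgeSet_adj]
            exact ⟨by exact_mod_cast Finset.mem_erase.mpr ⟨he, hmF⟩, h.2⟩
          rcases ih with h1 | h1 | h1
          · exact Or.inl (hadj.reachable.trans h1)
          · exact Or.inr (Or.inl (hadj.reachable.trans h1))
          · exact Or.inr (Or.inr (hadj.reachable.trans h1))
    intro v
    obtain ⟨p⟩ := hF.2.1.preconnected v a
    rcases aux v a p with h | h | h
    · exact Or.inl h
    · exact Or.inl h
    · exact Or.inr h
  -- the characterization of crossing via reachability to a
  have key : ∀ W : Finset V, cutEdges G W ∩ F = {s(a, b)} →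
      ∀ u v : V, ((u ∈ W) ↔ (v ∈ W)) ↔ (H'.Reachable u a ↔ H'.Reachable v a) := by
    intro W hW u v
    have hcross : (a ∈ W ∧ b ∉ W) ∨ (b ∈ W ∧ a ∉ W) := by
      have : s(a, b) ∈ cutEdges G W ∩ F := by rw [hW]; exact Finset.mem_singleton_self _
      exact (st11_mem_cutEdges heG).mp (Finset.mem_inter.mp this).1
    have spec : ∀ x : V, (H'.Reachable x a → (x ∈ W ↔ a ∈ W)) ∧
        (¬ H'.Reachable x a → (x ∈ W ↔ b ∈ W)) := by
      intro x
      refine ⟨fun hr => claimA W hW x a hr, fun hr => ?_⟩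
      rcases claimB x with h | h
      · exact absurd h hr
      · exact claimA W hW x b h
    have hu' := spec u
    have hv' := spec v
    constructor
    · intro h
      by_cases hu : H'.Reachable u a <;> by_cases hv : H'.Reachable v a
      · exact iff_of_true hu hv
      · exfalso
        have e1 := hu'.1 hu
        have e2 := hv'.2 hv
        rcases hcross with ⟨h5, h6⟩ | ⟨h5, h6⟩ <;> tauto
      · exfalso
        have e1 := hu'.2 hu
        have e2 := hv'.1 hv
        rcases hcross with ⟨h5, h6⟩ | ⟨h5, h6⟩ <;> tauto
      · exact iff_of_false hu hv
    · intro h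
      by_cases hu : H'.Reachable u a
      · have hv := h.mp hu
        exact (hu'.1 hu).trans (hv'.1 hv).symm
      · have hv : ¬ H'.Reachable v a := fun hv => hu (h.mpr hv)
        exact (hu'.2 hu).trans (hv'.2 hv).symm
  ext f
  by_cases hf : f ∈ edgesOf G
  · obtain ⟨u, w, rfl⟩ := st11_rep f
    rw [st11_mem_cutEdges hf, st11_mem_cutEdges hf]
    have k1 := key W₁ hC1 u w
    have k2 := key W₂ hC2 u w
    have lem : ∀ (P Q : Prop), ((P ∧ ¬Q) ∨ (Q ∧ ¬P)) ↔ ¬(P ↔ Q) := by tauto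
    rw [lem, lem, not_iff_not]
    exact k1.trans k2.symm
  · constructor <;> intro h <;> exact absurd (Finset.filter_subset _ _ h) hf

end Helpers3

noncomputable section Helpers4

variable {V : Type*} [Fintype V] [DecidableEq V]

lemma st11_sum_xQ (𝓕 : Finset (Finset (Sym2 V))) (lam : Finset (Sym2 V) → ℝ)
    (C : Finset (Sym2 V)) :
    (∑ e ∈ C, xQ 𝓕 lam C e)
      = ∑ F ∈ 𝓕, (if (C ∩ F).card = 1 then lam F else 0) := by
  unfold xQ
  simp only [Finset.sum_filter]
  rw [Finset.sum_comm]
  refine Finset.sum_congr rfl fun F _ => ?_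
  by_cases h1 : (C ∩ F).card = 1
  · obtain ⟨e₀, he₀⟩ := Finset.card_eq_one.mp h1
    have he₀C : e₀ ∈ C := by
      have : e₀ ∈ C ∩ F := by rw [he₀]; exact Finset.mem_singleton_self _
      exact (Finset.mem_inter.mp this).1
    rw [if_pos h1, Finset.sum_eq_single_of_mem e₀ he₀C]
    · rw [if_pos he₀]
    · intro f hf hne
      rw [if_neg]
      intro h
      exact hne (Finset.singleton_injective (he₀.symm.trans h)).symm
  · rw [if_neg h1, Finset.sum_eq_zero]
    intro f _
    rw [if_neg]
    intro h
    exact h1 (by rw [h, Finset.card_singleton])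

end Helpers4


/-- for every `Q ∈ 𝒬`: `x^Q` vanishes outside `Q`,
`Σ_e x^Q(e) = x^Q(Q) ≥ 2 - x*(Q)`, and `Σ_{Q ∈ 𝒬} x^Q ≤ p*` componentwise. -/
theorem stmt11 {V : Type*} [Fintype V] [DecidableEq V]
    (G : SimpleGraph V) (hG : G.Connected)
    (T : Finset V) (hT : Even T.card)
    (c : Sym2 V → ℝ) (hc : ∀ e, 0 ≤ c e)
    (xstar : Sym2 V → ℝ) (hxP : memP G T xstar)
    (hxmin : ∀ y : Sym2 V → ℝ, memP G T y → dotE G c xstar ≤ dotE G c y)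
    (𝓕 : Finset (Finset (Sym2 V))) (lam : Finset (Sym2 V) → ℝ)
    (h𝓕 : ∀ F ∈ 𝓕, IsSpanningTree G F) (hlam : ∀ F ∈ 𝓕, 0 < lam F)
    (hsum : ∑ F ∈ 𝓕, lam F = 1)
    (hdom : ∀ e ∈ edgesOf G, (∑ F ∈ 𝓕.filter (fun F => e ∈ F), lam F) ≤ xstar e)
    (JT : Finset (Sym2 V) → Finset (Sym2 V))
    (hJT : ∀ F ∈ 𝓕, JT F ⊆ F ∧ IsTJoin G T (JT F)) :
    (∀ C ∈ Qset G xstar,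
      (∀ e ∉ C, xQ 𝓕 lam C e = 0) ∧
      (∑ e : Sym2 V, xQ 𝓕 lam C e) = (∑ e ∈ C, xQ 𝓕 lam C e) ∧
      2 - xval xstar C ≤ ∑ e ∈ C, xQ 𝓕 lam C e) ∧
    (∀ e : Sym2 V, (∑ C ∈ Qset G xstar, xQ 𝓕 lam C e) ≤ pstar 𝓕 lam JT e) := by
  constructor
  · intro C hC
    have hzero : ∀ e ∉ C, xQ 𝓕 lam C e = 0 := by
      intro e he
      refine Finset.sum_eq_zero fun F hF' => ?_
      rw [Finset.mem_filter] at hF'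
      have : e ∈ C ∩ F := by rw [hF'.2]; exact Finset.mem_singleton_self _
      exact absurd (Finset.mem_inter.mp this).1 he
    refine ⟨hzero,
      (Finset.sum_subset (Finset.subset_univ C) fun e _ he => hzero e he).symm, ?_⟩
    obtain ⟨W, hWne, hWu, hCW, hodd⟩ := st11_Qset_spec hxP hC
    have hCE : C ⊆ edgesOf G := by rw [hCW]; exact Finset.filter_subset _ _
    have hlow : ∀ F ∈ 𝓕, lam F * (2 - ((C ∩ F).card : ℝ))
        ≤ (if (C ∩ F).card = 1 then lam F else 0) := by
      intro F hF
      have hlamF := (hlam F hF).le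
      have hge1 : 1 ≤ (C ∩ F).card := by
        obtain ⟨f, hf1, hf2⟩ := st11_tree_meets_cut (h𝓕 F hF) hWne hWu
        refine Finset.card_pos.mpr ⟨f, Finset.mem_inter.mpr ⟨?_, hf2⟩⟩
        rw [hCW]; exact hf1
      by_cases h1 : (C ∩ F).card = 1
      · rw [if_pos h1, h1]; norm_num
      · have h2 : 2 ≤ (C ∩ F).card := by omega
        have h2' : (2 : ℝ) ≤ ((C ∩ F).card : ℝ) := by exact_mod_cast h2
        rw [if_neg h1]
        nlinarith
    have hdom' : ∑ F ∈ 𝓕, lam F * ((C ∩ F).card : ℝ) ≤ xval xstar C := by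
      have step1 : ∀ F ∈ 𝓕, lam F * ((C ∩ F).card : ℝ)
          = ∑ e ∈ C, (if e ∈ F then lam F else 0) := by
        intro F _
        rw [← Finset.sum_filter, Finset.filter_mem_eq_inter, Finset.sum_const,
          nsmul_eq_mul, mul_comm]
      calc ∑ F ∈ 𝓕, lam F * ((C ∩ F).card : ℝ)
          = ∑ F ∈ 𝓕, ∑ e ∈ C, (if e ∈ F then lam F else 0) :=
            Finset.sum_congr rfl step1
        _ = ∑ e ∈ C, ∑ F ∈ 𝓕, (if e ∈ F then lam F else 0) := Finset.sum_comm
        _ = ∑ e ∈ C, ∑ F ∈ 𝓕.filter (fun F => e ∈ F), lam F :=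
            Finset.sum_congr rfl fun e _ => (Finset.sum_filter _ _).symm
        _ ≤ ∑ e ∈ C, xstar e := Finset.sum_le_sum fun e he => hdom e (hCE he)
        _ = xval xstar C := rfl
    have hmain : ∑ F ∈ 𝓕, lam F * (2 - ((C ∩ F).card : ℝ))
        = 2 - ∑ F ∈ 𝓕, lam F * ((C ∩ F).card : ℝ) := by
      simp only [mul_sub]
      rw [Finset.sum_sub_distrib, ← Finset.sum_mul, hsum]
      ring
    have hle := Finset.sum_le_sum hlow
    rw [st11_sum_xQ]
    linarith
  · intro e
    have hswap : (∑ C ∈ Qset G xstar, xQ 𝓕 lam C e)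
        = ∑ F ∈ 𝓕, ∑ C ∈ Qset G xstar, (if C ∩ F = {e} then lam F else 0) := by
      unfold xQ
      simp only [Finset.sum_filter]
      exact Finset.sum_comm
    rw [hswap]
    have hbound : ∀ F ∈ 𝓕, (∑ C ∈ Qset G xstar, if C ∩ F = {e} then lam F else 0)
        ≤ (if e ∈ JT F then lam F else 0) := by
      intro F hF
      by_cases hex : ∃ C₀, C₀ ∈ Qset G xstar ∧ C₀ ∩ F = {e}
      · obtain ⟨C₀, hC₀Q, hC₀⟩ := hex
        have huniq : ∀ C ∈ Qset G xstar, C ∩ F = {e} → C = C₀ := by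
          intro C hCQ hCe
          obtain ⟨W₁, _, _, hW1, _⟩ := st11_Qset_spec hxP hCQ
          obtain ⟨W₂, _, _, hW2, _⟩ := st11_Qset_spec hxP hC₀Q
          rw [hW1, hW2]
          exact st11_cut_unique (h𝓕 F hF) (by rw [← hW1]; exact hCe)
            (by rw [← hW2]; exact hC₀)
        have hz : ∀ C ∈ Qset G xstar, C ≠ C₀ →
            (if C ∩ F = {e} then lam F else 0) = 0 := by
          intro C hCQ hne
          rw [if_neg]
          exact fun h => hne (huniq C hCQ h)
        have hsum1 : (∑ C ∈ Qset G xstar, if C ∩ F = {e} then lam F else 0) = lam F := by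
          rw [Finset.sum_eq_single_of_mem C₀ hC₀Q hz, if_pos hC₀]
        have heJT : e ∈ JT F := by
          obtain ⟨W, hWne, hWu, hCW, hodd'⟩ := st11_Qset_spec hxP hC₀Q
          have hoddJ : Odd ((cutEdges G W ∩ JT F).card) :=
            st11_join_meets_cut (hJT F hF).2 hodd'
          obtain ⟨k, hk⟩ := hoddJ
          have hne : (cutEdges G W ∩ JT F).Nonempty := by
            rw [← Finset.card_pos, hk]; omega
          obtain ⟨f, hf⟩ := hne
          rw [Finset.mem_inter] at hf
          have hfC : f ∈ C₀ ∩ F := Finset.mem_inter.mpr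
            ⟨by rw [hCW]; exact hf.1, (hJT F hF).1 hf.2⟩
          rw [hC₀, Finset.mem_singleton] at hfC
          exact hfC ▸ hf.2
        rw [hsum1, if_pos heJT]
      · push_neg at hex
        rw [Finset.sum_eq_zero]
        · split_ifs with h
          · exact (hlam F hF).le
          · exact le_rfl
        · intro C hCQ
          rw [if_neg (hex C hCQ)]
    calc (∑ F ∈ 𝓕, ∑ C ∈ Qset G xstar, if C ∩ F = {e} then lam F else 0)
        ≤ ∑ F ∈ 𝓕, (if e ∈ JT F then lam F else 0) := Finset.sum_le_sum hbound
      _ = pstar 𝓕 lam JT e := by unfold pstar; rw [Finset.sum_filter]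
end
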